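/- arXiv:1202.0835 — 8 statements merged into one kernel-verified Lean document; each statement's English description precedes it below -/
import Mathlib

section
/- Let S be a nonempty finite set of points in the Euclidean plane ℝ² and let Φ : ℝ² → ℝ be a function that is antitone in the distances to the points of S, i.e., whenever two points z, z' ∈ ℝ² satisfy dist(z, q) ≤ dist(z', q) for every q ∈ S, then Φ(z') ≤ Φ(z). Then for every point z' ∈ ℝ² with z' ∉ convexHull ℝ S there exists a point z ∈ convexHull ℝ S with Φ(z') ≤ Φ(z). (In particular, the optimal relay position maximizing any such distance-antitone objective, e.g. the multicast max-flow, can be taken inside the convex hull of the nodes — Proposition 1, max-flow part.) -/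
open scoped RealInnerProductSpace

section ConvexProjection

variable {E : Type*} [NormedAddCommGroup E] [InnerProductSpace ℝ E] {K : Set E}

/-- The nearest-point characterisation puts `K` in the half-space `⟪u - v, · - v⟫ ≤ 0`,
where the angle at `v` between `u` and `q` is obtuse. -/
theorem dist_le_dist_of_norm_eq_iInf (hK : Convex ℝ K) {u v : E} (hv : v ∈ K)
    (hmin : ‖u - v‖ = ⨅ w : K, ‖u - w‖) {q : E} (hq : q ∈ K) : dist v q ≤ dist u q := by
  have hobtuse : ⟪u - v, q - v⟫ ≤ 0 := (norm_eq_iInf_iff_real_inner_le_zero hK hv).1 hmin q hq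
  have hexpand : ‖u - q‖ ^ 2 = ‖u - v‖ ^ 2 - 2 * ⟪u - v, q - v⟫ + ‖q - v‖ ^ 2 := by
    rw [show u - q = (u - v) - (q - v) by abel, norm_sub_sq_real]
  have hsq : ‖v - q‖ ^ 2 ≤ ‖u - q‖ ^ 2 := by
    rw [hexpand, norm_sub_rev v q]
    nlinarith [sq_nonneg ‖u - v‖]
  rw [dist_eq_norm, dist_eq_norm]
  exact (sq_le_sq₀ (norm_nonneg _) (norm_nonneg _)).1 hsq

theorem exists_mem_forall_dist_le_of_isComplete (hne : K.Nonempty) (hcomplete : IsComplete K)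
    (hK : Convex ℝ K) (u : E) : ∃ v ∈ K, ∀ q ∈ K, dist v q ≤ dist u q := by
  obtain ⟨v, hv, hmin⟩ := exists_norm_eq_iInf_of_complete_convex hne hcomplete hK u
  exact ⟨v, hv, fun q hq => dist_le_dist_of_norm_eq_iInf hK hv hmin hq⟩

end ConvexProjection

theorem relay_in_convexHull_maxflow_general
    (S : Set (EuclideanSpace ℝ (Fin 2))) (hSfin : S.Finite) (hSne : S.Nonempty)
    (Φ : EuclideanSpace ℝ (Fin 2) → ℝ)
    (hΦ : ∀ z z' : EuclideanSpace ℝ (Fin 2),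
      (∀ q ∈ S, dist z q ≤ dist z' q) → Φ z' ≤ Φ z)
    (z' : EuclideanSpace ℝ (Fin 2)) :
    ∃ z ∈ convexHull ℝ S, Φ z' ≤ Φ z := by
  obtain ⟨v, hv, hcloser⟩ := exists_mem_forall_dist_le_of_isComplete
    (hSne.mono (subset_convexHull ℝ S)) (hSfin.isCompact_convexHull ℝ).isComplete
    (convex_convexHull ℝ S) z'
  exact ⟨v, hv, hΦ v z' fun q hq => hcloser q (subset_convexHull ℝ S hq)⟩

/-- Proposition 1 (max-flow part): for a distance-antitone objective `Φ`, any point outside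
the convex hull of the node set `S` is dominated by some point inside the convex hull. -/
theorem relay_in_convexHull_maxflow
    (S : Set (EuclideanSpace ℝ (Fin 2))) (hSfin : S.Finite) (hSne : S.Nonempty)
    (Φ : EuclideanSpace ℝ (Fin 2) → ℝ)
    (hΦ : ∀ z z' : EuclideanSpace ℝ (Fin 2),
      (∀ q ∈ S, dist z q ≤ dist z' q) → Φ z' ≤ Φ z)
    (z' : EuclideanSpace ℝ (Fin 2)) (hz' : z' ∉ convexHull ℝ S) :
    ∃ z ∈ convexHull ℝ S, Φ z' ≤ Φ z :=
  relay_in_convexHull_maxflow_general S hSfin hSne Φ hΦ z'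
end

section
/- Let S be a nonempty finite set of points in the Euclidean plane ℝ² and let Ψ : ℝ² → ℝ be a function that is monotone in the distances to the points of S, i.e., whenever two points z, z' ∈ ℝ² satisfy dist(z, q) ≤ dist(z', q) for every q ∈ S, then Ψ(z) ≤ Ψ(z'). Then for every point z' ∈ ℝ² with z' ∉ convexHull ℝ S there exists a point z ∈ convexHull ℝ S with Ψ(z) ≤ Ψ(z'). (In particular, the optimal relay position minimizing any such distance-monotone cost, e.g. the total network power for a target multicast flow, can be taken inside the convex hull of the nodes — Proposition 1, min-cost part.) -/
open RealInnerProductSpace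

section

variable {F : Type*} [NormedAddCommGroup F] [InnerProductSpace ℝ F]

lemma dist_le_dist_of_inner_sub_nonpos {z p q : F} (h : ⟪z - p, q - p⟫ ≤ 0) :
    dist p q ≤ dist z q := by
  have hsq : ‖p - q‖ ^ 2 ≤ ‖z - q‖ ^ 2 := by
    have hinner : 0 ≤ ⟪z - p, p - q⟫ := by
      rw [← neg_sub q p, inner_neg_right]
      linarith
    calc ‖p - q‖ ^ 2 ≤ ‖z - p‖ ^ 2 + 2 * ⟪z - p, p - q⟫ + ‖p - q‖ ^ 2 := by
          nlinarith [sq_nonneg ‖z - p‖]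
      _ = ‖z - q‖ ^ 2 := by rw [← norm_add_sq_real, sub_add_sub_cancel]
  rw [dist_eq_norm, dist_eq_norm]
  exact (sq_le_sq₀ (norm_nonneg _) (norm_nonneg _)).mp hsq

/-- The metric projection onto `K` moves `z` closer to every point of `K`. -/
lemma Convex.exists_forall_dist_le {K : Set F} (hK : Convex ℝ K) (hKne : K.Nonempty)
    (hKc : IsComplete K) (z : F) : ∃ p ∈ K, ∀ q ∈ K, dist p q ≤ dist z q := by
  obtain ⟨p, hpK, hproj⟩ := exists_norm_eq_iInf_of_complete_convex hKne hKc hK z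
  have hobtuse := (norm_eq_iInf_iff_real_inner_le_zero hK hpK).mp hproj
  exact ⟨p, hpK, fun q hq => dist_le_dist_of_inner_sub_nonpos (hobtuse q hq)⟩

end

theorem relay_in_convexHull_mincost_general
    (S : Set (EuclideanSpace ℝ (Fin 2))) (hSfin : S.Finite) (hSne : S.Nonempty)
    (Ψ : EuclideanSpace ℝ (Fin 2) → ℝ)
    (hΨ : ∀ z z' : EuclideanSpace ℝ (Fin 2),
      (∀ q ∈ S, dist z q ≤ dist z' q) → Ψ z ≤ Ψ z')
    (z' : EuclideanSpace ℝ (Fin 2)) :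
    ∃ z ∈ convexHull ℝ S, Ψ z ≤ Ψ z' := by
  obtain ⟨p, hpK, hcloser⟩ := (convex_convexHull ℝ S).exists_forall_dist_le
    (hSne.mono (subset_convexHull ℝ S)) (hSfin.isCompact_convexHull (𝕜 := ℝ)).isClosed.isComplete z'
  exact ⟨p, hpK, hΨ p z' fun q hq => hcloser q (subset_convexHull ℝ S hq)⟩

/-- Proposition 1 (min-cost part): for a distance-monotone cost `Ψ`, any point outside
the convex hull of the node set `S` is dominated by some point inside the convex hull. -/
theorem relay_in_convexHull_mincost
    (S : Set (EuclideanSpace ℝ (Fin 2))) (hSfin : S.Finite) (hSne : S.Nonempty)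
    (Ψ : EuclideanSpace ℝ (Fin 2) → ℝ)
    (hΨ : ∀ z z' : EuclideanSpace ℝ (Fin 2),
      (∀ q ∈ S, dist z q ≤ dist z' q) → Ψ z ≤ Ψ z')
    (z' : EuclideanSpace ℝ (Fin 2)) (hz' : z' ∉ convexHull ℝ S) :
    ∃ z ∈ convexHull ℝ S, Ψ z ≤ Ψ z' :=
  relay_in_convexHull_mincost_general S hSfin hSne Ψ hΨ z'
end

section
/- Let E be a real inner product space, C ⊆ E a nonempty convex set, r ∈ E a point with r ∉ C, and c ∈ C a nearest point of C to r, i.e., dist(r, c) ≤ dist(r, p) for every p ∈ C. Then for every point z on the segment joining c to r with z ≠ r, and for every p ∈ C, one has dist(z, p) < dist(r, p). (Moving the relay from a point outside the convex hull toward its nearest point in the hull strictly decreases the distance to every point of the hull.) -/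
/-!
The nearest point `c` is characterised by the variational inequality `⟪r - c, p - c⟫ ≤ 0` for
`p ∈ C`. For `z` on the segment from `c` to `r` this makes the angle of the triangle `r z p` at `z`
non-acute, `⟪r - z, z - p⟫ ≥ 0`, so by the law of cosines `r p` is strictly longer than `z p`
as soon as `z ≠ r`.
-/

open RealInnerProductSpace

section

variable {E : Type*} [NormedAddCommGroup E] [InnerProductSpace ℝ E]

theorem real_inner_sub_le_zero_of_forall_dist_le {K : Set E} (hK : Convex ℝ K) {u v : E}
    (hv : v ∈ K) (hmin : ∀ w ∈ K, dist u v ≤ dist u w) : ∀ w ∈ K, ⟪u - v, w - v⟫ ≤ 0 := by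
  have : Nonempty K := ⟨⟨v, hv⟩⟩
  refine (norm_eq_iInf_iff_real_inner_le_zero hK hv).1 (le_antisymm ?_ ?_)
  · exact le_ciInf fun w => by simpa only [dist_eq_norm] using hmin w w.2
  · exact ciInf_le (f := fun w : K => ‖u - w‖) ⟨0, by rintro _ ⟨w, rfl⟩; exact norm_nonneg _⟩
      ⟨v, hv⟩

theorem real_inner_sub_nonneg_of_mem_segment {c r p z : E} (hp : ⟪r - c, p - c⟫ ≤ 0)
    (hz : z ∈ segment ℝ c r) : 0 ≤ ⟪r - z, z - p⟫ := by
  obtain ⟨t, ⟨ht₀, ht₁⟩, rfl⟩ := (segment_eq_image' ℝ c r).subset hz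
  have hrz : r - (c + t • (r - c)) = (1 - t) • (r - c) := by
    rw [sub_smul, one_smul]; abel
  have hzp : c + t • (r - c) - p = t • (r - c) - (p - c) := by abel
  rw [hrz, hzp, real_inner_smul_left, inner_sub_right, real_inner_smul_right,
    real_inner_self_eq_norm_sq]
  have : 0 ≤ t * ‖r - c‖ ^ 2 := by positivity
  exact mul_nonneg (sub_nonneg.2 ht₁) (by linarith)

theorem dist_lt_dist_of_real_inner_nonneg {x y p : E} (h : 0 ≤ ⟪x - y, y - p⟫) (hyx : y ≠ x) :
    dist y p < dist x p := by
  have hxy : 0 < ‖x - y‖ := norm_pos_iff.2 (sub_ne_zero.2 hyx.symm)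
  have hsq : ‖y - p‖ ^ 2 < ‖x - p‖ ^ 2 := by
    rw [← sub_add_sub_cancel x y p, norm_add_sq_real]
    linarith [pow_pos hxy 2]
  rw [dist_eq_norm, dist_eq_norm]
  exact lt_of_pow_lt_pow_left₀ 2 (norm_nonneg _) hsq

end

theorem segment_toward_nearest_point_strictly_decreases_dist_general
    {E : Type*} [NormedAddCommGroup E] [InnerProductSpace ℝ E]
    (C : Set E) (hC : Convex ℝ C)
    (r : E)
    (c : E) (hc : c ∈ C) (hmin : ∀ p ∈ C, dist r c ≤ dist r p)
    (z : E) (hz : z ∈ segment ℝ c r) (hzr : z ≠ r)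
    (p : E) (hp : p ∈ C) :
    dist z p < dist r p :=
  dist_lt_dist_of_real_inner_nonneg
    (real_inner_sub_nonneg_of_mem_segment
      (real_inner_sub_le_zero_of_forall_dist_le hC hc hmin p hp) hz) hzr

/-- Moving a relay from a point `r` outside a convex set `C` toward the nearest point
`c ∈ C` strictly decreases the distance to every point of `C`. -/
theorem segment_toward_nearest_point_strictly_decreases_dist
    {E : Type*} [NormedAddCommGroup E] [InnerProductSpace ℝ E]
    (C : Set E) (hC : Convex ℝ C) (hCne : C.Nonempty)
    (r : E) (hr : r ∉ C)
    (c : E) (hc : c ∈ C) (hmin : ∀ p ∈ C, dist r c ≤ dist r p)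
    (z : E) (hz : z ∈ segment ℝ c r) (hzr : z ≠ r)
    (p : E) (hp : p ∈ C) :
    dist z p < dist r p :=
  segment_toward_nearest_point_strictly_decreases_dist_general C hC r c hc hmin z hz hzr p hp
end

section
/- Let h : ℝ → ℝ be continuous and nondecreasing on [0,∞), let a, b ≥ 0, let s be a point of the Euclidean plane ℝ², and let t₁, …, tₙ (n ≥ 1) be points of ℝ². Then the function Φ(p) = max( a · h(dist(p, s)), b · max_{1 ≤ i ≤ n} h(dist(p, tᵢ)) ) attains its global infimum over ℝ² at some point p* belonging to convexHull ℝ ({s} ∪ {t₁, …, tₙ}); i.e., there exists p* in this convex hull with Φ(p*) ≤ Φ(p) for all p ∈ ℝ². (Existence of the point p* of Equation (8) inside the convex hull of the nodes.) -/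
/-! The objective only depends on the distances to the nodes, through functions that are
nondecreasing, and the metric projection onto the convex hull `K` of the nodes moves every point
closer to every point of `K` (the projection `q` of `p` satisfies `⟪p - q, w - q⟫ ≤ 0` for
`w ∈ K`). Hence the infimum over the plane equals the infimum over the compact set `K`, where
the continuous objective attains it. -/

open Finset RealInnerProductSpace

section Projection

variable {F : Type*} [NormedAddCommGroup F] [InnerProductSpace ℝ F]

theorem dist_le_of_real_inner_sub_le_zero {p q w : F} (hinner : ⟪p - q, w - q⟫ ≤ 0) :
    dist q w ≤ dist p w := by
  have hsq : ‖w - p‖ ^ 2 = ‖w - q‖ ^ 2 - 2 * ⟪w - q, p - q⟫ + ‖p - q‖ ^ 2 := by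
    rw [← norm_sub_sq_real, sub_sub_sub_cancel_right]
  rw [real_inner_comm] at hinner
  rw [dist_comm q, dist_comm p, dist_eq_norm, dist_eq_norm]
  exact (pow_le_pow_iff_left₀ (norm_nonneg _) (norm_nonneg _) two_ne_zero).mp
    (by nlinarith [sq_nonneg ‖p - q‖])

theorem Convex.exists_dist_le_forall_mem {K : Set F} (hconv : Convex ℝ K)
    (hcomplete : IsComplete K) (hne : K.Nonempty) (p : F) :
    ∃ q ∈ K, ∀ w ∈ K, dist q w ≤ dist p w := by
  obtain ⟨q, hqK, hq⟩ := exists_norm_eq_iInf_of_complete_convex hne hcomplete hconv p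
  exact ⟨q, hqK, fun w hw =>
    dist_le_of_real_inner_sub_le_zero ((norm_eq_iInf_iff_real_inner_le_zero hconv hqK).mp hq w hw)⟩

end Projection

theorem IsCompact.exists_forall_le_of_forall_exists_le {β α : Type*} [TopologicalSpace β]
    [LinearOrder α] [TopologicalSpace α] [ClosedIicTopology α] {f : β → α} {K : Set β}
    (hK : IsCompact K) (hne : K.Nonempty) (hf : ContinuousOn f K)
    (hreach : ∀ p, ∃ q ∈ K, f q ≤ f p) : ∃ x ∈ K, ∀ p, f x ≤ f p := by
  obtain ⟨x, hxK, hmin⟩ := hK.exists_isMinOn hne hf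
  refine ⟨x, hxK, fun p => ?_⟩
  obtain ⟨q, hqK, hqp⟩ := hreach p
  exact (hmin hqK).trans hqp

section Objective

variable {α ι : Type*} [PseudoMetricSpace α] {h : ℝ → ℝ} {a b : ℝ} {s : α} {t : ι → α}
  {U : Finset ι} (hU : U.Nonempty)

/-- The objective of Equation (8), with weights `a = ν*`, `b = μ*` and the maximum over the
nodes `t i`, `i ∈ U`. -/
noncomputable def hyperarcObjective (h : ℝ → ℝ) (a b : ℝ) (s : α) (t : ι → α) (p : α) : ℝ :=
  max (a * h (dist p s)) (b * U.sup' hU fun i => h (dist p (t i)))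

theorem continuous_hyperarcObjective (hcont : ContinuousOn h (Set.Ici 0)) :
    Continuous (hyperarcObjective hU h a b s t) := by
  have hdist : ∀ x : α, Continuous fun p => h (dist p x) := fun x =>
    hcont.comp_continuous (continuous_id.dist continuous_const) fun _ => dist_nonneg
  refine (continuous_const.mul (hdist s)).max (continuous_const.mul ?_)
  exact continuous_iff_continuousAt.mpr fun _ =>
    ContinuousAt.finset_sup'_apply hU fun i _ => (hdist (t i)).continuousAt

theorem hyperarcObjective_le_of_dist_le (hmono : MonotoneOn h (Set.Ici 0)) (ha : 0 ≤ a)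
    (hb : 0 ≤ b) {p q : α} (hs : dist q s ≤ dist p s) (ht : ∀ i ∈ U, dist q (t i) ≤ dist p (t i)) :
    hyperarcObjective hU h a b s t q ≤ hyperarcObjective hU h a b s t p := by
  have hh : ∀ {z : α}, dist q z ≤ dist p z → h (dist q z) ≤ h (dist p z) :=
    fun hz => hmono dist_nonneg dist_nonneg hz
  refine max_le_max (mul_le_mul_of_nonneg_left (hh hs) ha) (mul_le_mul_of_nonneg_left ?_ hb)
  exact sup'_le _ _ fun i hi => (hh (ht i hi)).trans (le_sup' (fun i => h (dist p (t i))) hi)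

end Objective

/-- Existence of the point `p*` of Equation (8) inside the convex hull of the nodes:
the objective `max (a·h(dist p s), b·maxᵢ h(dist p tᵢ))` attains its global infimum
over the plane at a point of the convex hull of `{s} ∪ {t₁,…,tₙ}`. -/
theorem pstar_exists_in_convexHull
    (h : ℝ → ℝ) (hcont : ContinuousOn h (Set.Ici 0)) (hmono : MonotoneOn h (Set.Ici 0))
    (a b : ℝ) (ha : 0 ≤ a) (hb : 0 ≤ b)
    (s : EuclideanSpace ℝ (Fin 2))
    (n : ℕ) (hn : 1 ≤ n) (t : Fin n → EuclideanSpace ℝ (Fin 2)) :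
    ∃ pstar ∈ convexHull ℝ ({s} ∪ Set.range t),
      ∀ p : EuclideanSpace ℝ (Fin 2),
        max (a * h (dist pstar s))
            (b * Finset.univ.sup' (Finset.univ_nonempty_iff.mpr ⟨⟨0, hn⟩⟩)
              (fun i => h (dist pstar (t i)))) ≤
        max (a * h (dist p s))
            (b * Finset.univ.sup' (Finset.univ_nonempty_iff.mpr ⟨⟨0, hn⟩⟩)
              (fun i => h (dist p (t i)))) := by
  set K := convexHull ℝ ({s} ∪ Set.range t)
  have hsK : s ∈ K := subset_convexHull ℝ _ (Or.inl rfl)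
  have htK : ∀ i, t i ∈ K := fun i => subset_convexHull ℝ _ (Or.inr ⟨i, rfl⟩)
  have hKcompact : IsCompact K :=
    ((Set.finite_singleton s).union (Set.finite_range t)).isCompact_convexHull ℝ
  refine hKcompact.exists_forall_le_of_forall_exists_le ⟨s, hsK⟩
    (continuous_hyperarcObjective _ hcont).continuousOn fun p => ?_
  obtain ⟨q, hqK, hq⟩ :=
    (convex_convexHull ℝ _).exists_dist_le_forall_mem hKcompact.isClosed.isComplete ⟨s, hsK⟩ p
  exact ⟨q, hqK, hyperarcObjective_le_of_dist_le _ hmono ha hb (hq s hsK) fun i _ => hq _ (htK i)⟩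
end

section
/- Let n ≥ 1 and let c₁, …, cₙ : ℝ → ℝ be functions each nondecreasing on [0,∞), concave on [0,∞), and satisfying cᵢ(0) = 0. Let ζ > 0 and let t₁, …, tₙ ≥ 0 satisfy ∑_{i=1}^{n} tᵢ ≥ ζ. Then ∑_{i=1}^{n} cᵢ(tᵢ) ≥ min_{1 ≤ i ≤ n} cᵢ(ζ). (Concave cost aggregation lemma: splitting a required total flow ζ across paths with concave per-path cost functions can never cost less than routing all of ζ on the single cheapest path.) -/
/-!
Write `S = ∑ tᵢ ≥ ζ`. A concave function vanishing at `0` satisfies `a · c(x) ≤ c(a · x)` for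
`a ∈ [0, 1]`, so `cᵢ(tᵢ) ≥ (tᵢ / S) · cᵢ(S)`, and `cᵢ(S) ≥ cᵢ(ζ) ≥ minⱼ cⱼ(ζ)` by monotonicity.
Summing, the weights `tᵢ / S` add up to `1`.
-/

open Finset Set

theorem ConcaveOn.mul_le_map_mul {f : ℝ → ℝ} (hf : ConcaveOn ℝ (Ici 0) f) (h0 : f 0 = 0)
    {a x : ℝ} (ha₀ : 0 ≤ a) (ha₁ : a ≤ 1) (hx : 0 ≤ x) : a * f x ≤ f (a * x) := by
  simpa [h0] using
    hf.2 (mem_Ici.2 hx) (mem_Ici.2 le_rfl) ha₀ (sub_nonneg.2 ha₁) (add_sub_cancel a 1)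

theorem le_sum_of_le_map_sum_of_concaveOn {ι : Type*} {s : Finset ι} {c : ι → ℝ → ℝ}
    (hconc : ∀ i ∈ s, ConcaveOn ℝ (Ici 0) (c i)) (hc0 : ∀ i ∈ s, c i 0 = 0)
    {t : ι → ℝ} (ht : ∀ i ∈ s, 0 ≤ t i) (hpos : 0 < ∑ i ∈ s, t i)
    {m : ℝ} (hm : ∀ i ∈ s, m ≤ c i (∑ j ∈ s, t j)) : m ≤ ∑ i ∈ s, c i (t i) := by
  set S := ∑ i ∈ s, t i
  have hshare : ∀ i ∈ s, t i / S * m ≤ c i (t i) := fun i hi => by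
    have hw₀ : 0 ≤ t i / S := div_nonneg (ht i hi) hpos.le
    have hw₁ : t i / S ≤ 1 := (div_le_one hpos).2 (single_le_sum ht hi)
    calc t i / S * m ≤ t i / S * c i S := mul_le_mul_of_nonneg_left (hm i hi) hw₀
      _ ≤ c i (t i / S * S) := (hconc i hi).mul_le_map_mul (hc0 i hi) hw₀ hw₁ hpos.le
      _ = c i (t i) := by rw [div_mul_cancel₀ _ hpos.ne']
  calc m = ∑ i ∈ s, t i / S * m := by rw [← sum_mul, ← sum_div, div_self hpos.ne', one_mul]
    _ ≤ ∑ i ∈ s, c i (t i) := sum_le_sum hshare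

/-- Concave cost aggregation lemma: splitting a required total flow `ζ` across paths
with concave per-path cost functions can never cost less than routing all of `ζ` on
the single cheapest path. -/
theorem concave_cost_aggregation
    (n : ℕ) (hn : 1 ≤ n) (c : Fin n → ℝ → ℝ)
    (hmono : ∀ i, MonotoneOn (c i) (Set.Ici 0))
    (hconc : ∀ i, ConcaveOn ℝ (Set.Ici 0) (c i))
    (hc0 : ∀ i, c i 0 = 0)
    (ζ : ℝ) (hζ : 0 < ζ)
    (t : Fin n → ℝ) (ht : ∀ i, 0 ≤ t i) (hsum : ζ ≤ ∑ i, t i) :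
    Finset.univ.inf' (Finset.univ_nonempty_iff.mpr ⟨⟨0, hn⟩⟩) (fun i => c i ζ) ≤
      ∑ i, c i (t i) := by
  refine le_sum_of_le_map_sum_of_concaveOn (fun i _ => hconc i) (fun i _ => hc0 i)
    (fun i _ => ht i) (hζ.trans_le hsum) fun i hi => ?_
  exact (inf'_le _ hi).trans (hmono i (mem_Ici.2 hζ.le) (mem_Ici.2 (hζ.le.trans hsum)) hsum)
end

section
/- Let f, g : ℝ → ℝ be nondecreasing on [0,∞) with f(0) = g(0) = 0, and let F, G : ℝ → ℝ be nondecreasing on [0,∞), concave on [0,∞), with F(0) = G(0) = 0, F(f(x)) ≤ x for all x ≥ 0, and G(g(y)) ≤ y for all y ≥ 0. Let n ≥ 1, let λ₁, …, λₙ > 0 and λ'₁, …, λ'ₙ > 0, let ζ > 0, and let x₁, …, xₙ ≥ 0 and y₁, …, yₙ ≥ 0 satisfy ∑_{i=1}^{n} min(λᵢ · f(xᵢ), λ'ᵢ · g(yᵢ)) ≥ ζ. Then ∑_{i=1}^{n} (xᵢ + yᵢ) ≥ min_{1 ≤ i ≤ n} ( F(ζ/λᵢ) + G(ζ/λ'ᵢ)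 ). (Lower-bound half of Proposition 5 of the appendix: the total power of any allocation carrying multicast flow ζ is at least the cost of concentrating the whole flow on the cheapest path.) -/
lemma conc_lb (F : ℝ → ℝ) (hFconc : ConcaveOn ℝ (Set.Ici 0) F) (hF0 : F 0 = 0)
    {z S : ℝ} (hz : 0 ≤ z) (hzS : z ≤ S) (hS : 0 < S) :
    (z / S) * F S ≤ F z := by
  have hb : 0 ≤ z / S := div_nonneg hz hS.le
  have ha : 0 ≤ 1 - z / S := by
    have : z / S ≤ 1 := (div_le_one hS).mpr hzS
    linarith
  have hab : (1 - z / S) + z / S = 1 := by ring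
  have := hFconc.2 (Set.mem_Ici.mpr le_rfl) (Set.mem_Ici.mpr (hz.trans hzS)) ha hb hab
  simp only [smul_eq_mul, mul_zero, zero_add, hF0, mul_zero] at this
  have hzz : (z / S) * S = z := div_mul_cancel₀ z hS.ne'
  rw [hzz] at this
  linarith

/-- Lower-bound half of Proposition 5 of the appendix: the total power of any allocation
carrying multicast flow `ζ` is at least the cost of concentrating the whole flow on the
cheapest path. -/
theorem mincost_lower_bound
    (f g F G : ℝ → ℝ)
    (hf : MonotoneOn f (Set.Ici 0)) (hg : MonotoneOn g (Set.Ici 0))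
    (hf0 : f 0 = 0) (hg0 : g 0 = 0)
    (hFmono : MonotoneOn F (Set.Ici 0)) (hGmono : MonotoneOn G (Set.Ici 0))
    (hFconc : ConcaveOn ℝ (Set.Ici 0) F) (hGconc : ConcaveOn ℝ (Set.Ici 0) G)
    (hF0 : F 0 = 0) (hG0 : G 0 = 0)
    (hFf : ∀ x : ℝ, 0 ≤ x → F (f x) ≤ x) (hGg : ∀ y : ℝ, 0 ≤ y → G (g y) ≤ y)
    (n : ℕ) (hn : 1 ≤ n) (lam lam' : Fin n → ℝ)
    (hlam : ∀ i, 0 < lam i) (hlam' : ∀ i, 0 < lam' i)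
    (ζ : ℝ) (hζ : 0 < ζ)
    (x y : Fin n → ℝ) (hx : ∀ i, 0 ≤ x i) (hy : ∀ i, 0 ≤ y i)
    (hflow : ζ ≤ ∑ i, min (lam i * f (x i)) (lam' i * g (y i))) :
    Finset.univ.inf' (Finset.univ_nonempty_iff.mpr ⟨⟨0, hn⟩⟩)
        (fun i => F (ζ / lam i) + G (ζ / lam' i)) ≤
      ∑ i, (x i + y i) := by
  set z : Fin n → ℝ := fun i => min (lam i * f (x i)) (lam' i * g (y i)) with hzdef
  have hfx : ∀ i, 0 ≤ f (x i) := fun i => by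
    have := hf (Set.mem_Ici.mpr le_rfl) (Set.mem_Ici.mpr (hx i)) (hx i)
    rw [hf0] at this; exact this
  have hgy : ∀ i, 0 ≤ g (y i) := fun i => by
    have := hg (Set.mem_Ici.mpr le_rfl) (Set.mem_Ici.mpr (hy i)) (hy i)
    rw [hg0] at this; exact this
  have hz0 : ∀ i, 0 ≤ z i := fun i =>
    le_min (mul_nonneg (hlam i).le (hfx i)) (mul_nonneg (hlam' i).le (hgy i))
  set S : ℝ := ∑ i, z i with hSdef
  have hSζ : ζ ≤ S := hflow
  have hSpos : 0 < S := lt_of_lt_of_le hζ hSζ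
  have hzS : ∀ i, z i ≤ S :=
    fun i => Finset.single_le_sum (fun j _ => hz0 j) (Finset.mem_univ i)
  -- step 1 : F (z i / lam i) + G (z i / lam' i) ≤ x i + y i
  have step1 : ∀ i, F (z i / lam i) + G (z i / lam' i) ≤ x i + y i := by
    intro i
    have h1 : z i / lam i ≤ f (x i) := by
      rw [div_le_iff₀ (hlam i)]
      calc z i ≤ lam i * f (x i) := min_le_left _ _
        _ = f (x i) * lam i := mul_comm _ _
    have h2 : z i / lam' i ≤ g (y i) := by
      rw [div_le_iff₀ (hlam' i)]
      calc z i ≤ lam' i * g (y i) := min_le_right _ _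
        _ = g (y i) * lam' i := mul_comm _ _
    have hFle : F (z i / lam i) ≤ x i :=
      (hFmono (Set.mem_Ici.mpr (div_nonneg (hz0 i) (hlam i).le))
        (Set.mem_Ici.mpr (hfx i)) h1).trans (hFf _ (hx i))
    have hGle : G (z i / lam' i) ≤ y i :=
      (hGmono (Set.mem_Ici.mpr (div_nonneg (hz0 i) (hlam' i).le))
        (Set.mem_Ici.mpr (hgy i)) h2).trans (hGg _ (hy i))
    linarith
  -- step 2 : (z i / S) * (F (S/lam i) + G (S/lam' i)) ≤ F (z i/lam i) + G (z i/lam' i)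
  have step2 : ∀ i, (z i / S) * (F (S / lam i) + G (S / lam' i)) ≤
      F (z i / lam i) + G (z i / lam' i) := by
    intro i
    have hF' := conc_lb F hFconc hF0 (div_nonneg (hz0 i) (hlam i).le)
      (div_le_div_of_nonneg_right (hzS i) (hlam i).le) (div_pos hSpos (hlam i))
    have hG' := conc_lb G hGconc hG0 (div_nonneg (hz0 i) (hlam' i).le)
      (div_le_div_of_nonneg_right (hzS i) (hlam' i).le) (div_pos hSpos (hlam' i))
    have e1 : (z i / lam i) / (S / lam i) = z i / S := by
      rw [div_div_div_cancel_right₀ (hlam i).ne' _ _]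
    have e2 : (z i / lam' i) / (S / lam' i) = z i / S := by
      rw [div_div_div_cancel_right₀ (hlam' i).ne' _ _]
    rw [e1] at hF'; rw [e2] at hG'
    rw [mul_add]
    exact add_le_add hF' hG'
  set m : ℝ := Finset.univ.inf' (Finset.univ_nonempty_iff.mpr ⟨⟨0, hn⟩⟩)
      (fun i => F (ζ / lam i) + G (ζ / lam' i)) with hmdef
  -- step 3 : (z i / S) * m ≤ (z i / S) * (F (S/lam i) + G (S/lam' i))
  have step3 : ∀ i, (z i / S) * m ≤ (z i / S) * (F (S / lam i) + G (S / lam' i)) := by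
    intro i
    apply mul_le_mul_of_nonneg_left _ (div_nonneg (hz0 i) hSpos.le)
    have hm : m ≤ F (ζ / lam i) + G (ζ / lam' i) :=
      Finset.inf'_le _ (Finset.mem_univ i)
    have hFm : F (ζ / lam i) ≤ F (S / lam i) :=
      hFmono (Set.mem_Ici.mpr (div_nonneg hζ.le (hlam i).le))
        (Set.mem_Ici.mpr (div_nonneg hSpos.le (hlam i).le))
        (div_le_div_of_nonneg_right hSζ (hlam i).le)
    have hGm : G (ζ / lam' i) ≤ G (S / lam' i) :=
      hGmono (Set.mem_Ici.mpr (div_nonneg hζ.le (hlam' i).le))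
        (Set.mem_Ici.mpr (div_nonneg hSpos.le (hlam' i).le))
        (div_le_div_of_nonneg_right hSζ (hlam' i).le)
    linarith
  have sum_eq : ∑ i, (z i / S) * m = m := by
    rw [← Finset.sum_mul, ← Finset.sum_div, ← hSdef, div_self hSpos.ne', one_mul]
  calc m = ∑ i, (z i / S) * m := sum_eq.symm
    _ ≤ ∑ i, (z i / S) * (F (S / lam i) + G (S / lam' i)) :=
        Finset.sum_le_sum fun i _ => step3 i
    _ ≤ ∑ i, (F (z i / lam i) + G (z i / lam' i)) :=
        Finset.sum_le_sum fun i _ => step2 i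
    _ ≤ ∑ i, (x i + y i) := Finset.sum_le_sum fun i _ => step1 i
end

section
/- Let f, g : ℝ → ℝ be strictly increasing on [0,∞) and convex on [0,∞) with f(0) = g(0) = 0, and let F, G : ℝ → ℝ satisfy F(f(x)) = x, G(g(x)) = x, f(F(z)) = z, and g(G(z)) = z for all x, z ≥ 0, with F(z) ≥ 0 and G(z) ≥ 0 for z ≥ 0. Let n ≥ 1, let λ₁, …, λₙ > 0 and λ'₁, …, λ'ₙ > 0, and let ζ > 0. Then the minimum of ∑_{i=1}^{n} (xᵢ + yᵢ) over all x₁, …, xₙ ≥ 0 and y₁, …, yₙ ≥ 0 satisfying ∑_{i=1}^{n} min(λᵢ · f(xᵢ), λ'ᵢ · g(yᵢ)) ≥ ζ equals min_{1 ≤ i ≤ n} ( F(ζ/λᵢ) + G(ζ/λ'ᵢ) ), and it is attained by an allocation supported on a single index m attaining this minimum (xₘ = F(ζ/λₘ), yₘ = G(ζ/λ'ₘ), and all other xᵢ = yᵢ = 0). (Proposition 5 of the appendix: the min-cost multicast flow concentrates on the single cheapest path.) -/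
/-- Proposition 5 of the appendix: the min-cost multicast flow concentrates on the
single cheapest path. The minimum of the total power over all feasible allocations
equals `minᵢ (F(ζ/λᵢ) + G(ζ/λ'ᵢ))`, and it is attained by the allocation supported on
a single index `m` attaining this minimum. -/
theorem mincost_concentration
    (f g F G : ℝ → ℝ)
    (hf : StrictMonoOn f (Set.Ici 0)) (hg : StrictMonoOn g (Set.Ici 0))
    (hfconv : ConvexOn ℝ (Set.Ici 0) f) (hgconv : ConvexOn ℝ (Set.Ici 0) g)
    (hf0 : f 0 = 0) (hg0 : g 0 = 0)
    (hFf : ∀ x : ℝ, 0 ≤ x → F (f x) = x) (hGg : ∀ x : ℝ, 0 ≤ x → G (g x) = x)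
    (hfF : ∀ z : ℝ, 0 ≤ z → f (F z) = z) (hgG : ∀ z : ℝ, 0 ≤ z → g (G z) = z)
    (hFpos : ∀ z : ℝ, 0 ≤ z → 0 ≤ F z) (hGpos : ∀ z : ℝ, 0 ≤ z → 0 ≤ G z)
    (n : ℕ) (hn : 1 ≤ n) (lam lam' : Fin n → ℝ)
    (hlam : ∀ i, 0 < lam i) (hlam' : ∀ i, 0 < lam' i)
    (ζ : ℝ) (hζ : 0 < ζ) :
    ∃ m : Fin n,
      F (ζ / lam m) + G (ζ / lam' m) =
        Finset.univ.inf' (Finset.univ_nonempty_iff.mpr ⟨⟨0, hn⟩⟩)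
          (fun i => F (ζ / lam i) + G (ζ / lam' i)) ∧
      IsLeast { P : ℝ | ∃ x y : Fin n → ℝ, (∀ i, 0 ≤ x i) ∧ (∀ i, 0 ≤ y i) ∧
          ζ ≤ ∑ i, min (lam i * f (x i)) (lam' i * g (y i)) ∧
          P = ∑ i, (x i + y i) }
        (F (ζ / lam m) + G (ζ / lam' m)) ∧
      (ζ ≤ ∑ i, min (lam i * f (if i = m then F (ζ / lam m) else 0))
                    (lam' i * g (if i = m then G (ζ / lam' m) else 0)) ∧
       ∑ i, ((if i = m then F (ζ / lam m) else 0) + (if i = m then G (ζ / lam' m) else 0)) =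
         F (ζ / lam m) + G (ζ / lam' m)) := by
  -- basic nonnegativity facts
  have hfnn : ∀ x : ℝ, 0 ≤ x → 0 ≤ f x := by
    intro x hx
    have := (hf.le_iff_le (Set.self_mem_Ici) (Set.mem_Ici.mpr hx)).mpr hx
    rwa [hf0] at this
  have hgnn : ∀ x : ℝ, 0 ≤ x → 0 ≤ g x := by
    intro x hx
    have := (hg.le_iff_le (Set.self_mem_Ici) (Set.mem_Ici.mpr hx)).mpr hx
    rwa [hg0] at this
  -- monotonicity of F, G
  have hFmono : ∀ u v : ℝ, 0 ≤ u → u ≤ v → F u ≤ F v := by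
    intro u v hu huv
    have hv : 0 ≤ v := hu.trans huv
    have := hf.le_iff_le (Set.mem_Ici.mpr (hFpos u hu)) (Set.mem_Ici.mpr (hFpos v hv))
    rw [hfF u hu, hfF v hv] at this
    exact this.mp huv
  have hGmono : ∀ u v : ℝ, 0 ≤ u → u ≤ v → G u ≤ G v := by
    intro u v hu huv
    have hv : 0 ≤ v := hu.trans huv
    have := hg.le_iff_le (Set.mem_Ici.mpr (hGpos u hu)) (Set.mem_Ici.mpr (hGpos v hv))
    rw [hgG u hu, hgG v hv] at this
    exact this.mp huv
  -- superhomogeneity of F, G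
  have hFscale : ∀ s z : ℝ, 0 ≤ s → s ≤ 1 → 0 ≤ z → s * F z ≤ F (s * z) := by
    intro s z hs hs1 hz
    have hFz := hFpos z hz
    have hconv := hfconv.2 (Set.mem_Ici.mpr hFz) (Set.self_mem_Ici) hs (by linarith)
      (by ring : s + (1 - s) = 1)
    simp only [smul_eq_mul, mul_zero, add_zero, hf0] at hconv
    rw [hfF z hz] at hconv
    -- hconv : f (s * F z) ≤ s * z
    have h1 : 0 ≤ s * F z := mul_nonneg hs hFz
    have h2 : 0 ≤ s * z := mul_nonneg hs hz
    have := hf.le_iff_le (Set.mem_Ici.mpr h1) (Set.mem_Ici.mpr (hFpos _ h2))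
    rw [hfF _ h2] at this
    exact this.mp hconv
  have hGscale : ∀ s z : ℝ, 0 ≤ s → s ≤ 1 → 0 ≤ z → s * G z ≤ G (s * z) := by
    intro s z hs hs1 hz
    have hGz := hGpos z hz
    have hconv := hgconv.2 (Set.mem_Ici.mpr hGz) (Set.self_mem_Ici) hs (by linarith)
      (by ring : s + (1 - s) = 1)
    simp only [smul_eq_mul, mul_zero, add_zero, hg0] at hconv
    rw [hgG z hz] at hconv
    have h1 : 0 ≤ s * G z := mul_nonneg hs hGz
    have h2 : 0 ≤ s * z := mul_nonneg hs hz
    have := hg.le_iff_le (Set.mem_Ici.mpr h1) (Set.mem_Ici.mpr (hGpos _ h2))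
    rw [hgG _ h2] at this
    exact this.mp hconv
  have hne : (Finset.univ : Finset (Fin n)).Nonempty := Finset.univ_nonempty_iff.mpr ⟨⟨0, hn⟩⟩
  have hcostnn : ∀ i : Fin n, 0 ≤ F (ζ / lam i) + G (ζ / lam' i) := fun i =>
    add_nonneg (hFpos _ (div_nonneg hζ.le (hlam i).le)) (hGpos _ (div_nonneg hζ.le (hlam' i).le))
  obtain ⟨m, -, hm⟩ := Finset.exists_mem_eq_inf' hne (fun i => F (ζ / lam i) + G (ζ / lam' i))
  set c : ℝ := Finset.univ.inf' hne (fun i => F (ζ / lam i) + G (ζ / lam' i)) with hc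
  have hcnn : 0 ≤ c := Finset.le_inf' hne _ (fun i _ => hcostnn i)
  refine ⟨m, hm.symm, ⟨?_, ?_⟩, ?_, ?_⟩
  · -- membership: the concentrated allocation is feasible with this cost
    refine ⟨(fun i => if i = m then F (ζ / lam m) else 0),
            (fun i => if i = m then G (ζ / lam' m) else 0), ?_, ?_, ?_, ?_⟩
    · intro i; by_cases h : i = m <;> simp [h, hFpos _ (div_nonneg hζ.le (hlam m).le)]
    · intro i; by_cases h : i = m <;> simp [h, hGpos _ (div_nonneg hζ.le (hlam' m).le)]
    · have heq : ∀ i : Fin n, min (lam i * f (if i = m then F (ζ / lam m) else 0))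
          (lam' i * g (if i = m then G (ζ / lam' m) else 0)) = if i = m then ζ else 0 := by
        intro i
        by_cases h : i = m
        · subst h
          rw [if_pos rfl, if_pos rfl, hfF _ (div_nonneg hζ.le (hlam i).le),
            hgG _ (div_nonneg hζ.le (hlam' i).le),
            mul_div_cancel₀ _ (hlam i).ne', mul_div_cancel₀ _ (hlam' i).ne', min_self, if_pos rfl]
        · simp [h, hf0, hg0]
      rw [Finset.sum_congr rfl (fun i _ => heq i)]
      simp
    · rw [Finset.sum_congr rfl (fun i _ => by
        by_cases h : i = m <;> simp [h] :
        ∀ i ∈ Finset.univ, ((fun i => if i = m then F (ζ / lam m) else 0) i +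
          (fun i => if i = m then G (ζ / lam' m) else 0) i)
          = if i = m then F (ζ / lam m) + G (ζ / lam' m) else 0)]
      simp
  · -- lower bound
    rintro P ⟨x, y, hx, hy, hfeas, rfl⟩
    rw [← hm]
    set φ : Fin n → ℝ := fun i => min (lam i * f (x i)) (lam' i * g (y i)) with hφ
    have hφ0 : ∀ i, 0 ≤ φ i := fun i =>
      le_min (mul_nonneg (hlam i).le (hfnn _ (hx i))) (mul_nonneg (hlam' i).le (hgnn _ (hy i)))
    have hxF : ∀ i, F (φ i / lam i) ≤ x i := by
      intro i
      have h1 : φ i / lam i ≤ f (x i) := by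
        rw [div_le_iff₀ (hlam i)]
        have := min_le_left (lam i * f (x i)) (lam' i * g (y i))
        linarith [this]
      have h2 : 0 ≤ φ i / lam i := div_nonneg (hφ0 i) (hlam i).le
      have := hf.le_iff_le (Set.mem_Ici.mpr (hFpos _ h2)) (Set.mem_Ici.mpr (hx i))
      rw [hfF _ h2] at this
      exact this.mp h1
    have hyG : ∀ i, G (φ i / lam' i) ≤ y i := by
      intro i
      have h1 : φ i / lam' i ≤ g (y i) := by
        rw [div_le_iff₀ (hlam' i)]
        have := min_le_right (lam i * f (x i)) (lam' i * g (y i))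
        linarith [this]
      have h2 : 0 ≤ φ i / lam' i := div_nonneg (hφ0 i) (hlam' i).le
      have := hg.le_iff_le (Set.mem_Ici.mpr (hGpos _ h2)) (Set.mem_Ici.mpr (hy i))
      rw [hgG _ h2] at this
      exact this.mp h1
    have hhnn : ∀ i : Fin n, 0 ≤ F (φ i / lam i) + G (φ i / lam' i) := fun i =>
      add_nonneg (hFpos _ (div_nonneg (hφ0 i) (hlam i).le))
        (hGpos _ (div_nonneg (hφ0 i) (hlam' i).le))
    have key : c ≤ ∑ i, (F (φ i / lam i) + G (φ i / lam' i)) := by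
      by_cases hcase : ∃ j, ζ ≤ φ j
      · obtain ⟨j, hj⟩ := hcase
        have h1 : c ≤ F (ζ / lam j) + G (ζ / lam' j) :=
          Finset.inf'_le _ (Finset.mem_univ j)
        have h2 : F (ζ / lam j) + G (ζ / lam' j) ≤ F (φ j / lam j) + G (φ j / lam' j) :=
          add_le_add
            (hFmono _ _ (div_nonneg hζ.le (hlam j).le) ((div_le_div_iff_of_pos_right (hlam j)).mpr hj))
            (hGmono _ _ (div_nonneg hζ.le (hlam' j).le) ((div_le_div_iff_of_pos_right (hlam' j)).mpr hj))
        have h3 : F (φ j / lam j) + G (φ j / lam' j) ≤ ∑ i, (F (φ i / lam i) + G (φ i / lam' i)) :=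
          Finset.single_le_sum (fun i _ => hhnn i) (Finset.mem_univ j)
        linarith
      · push_neg at hcase
        have hstep : ∀ i : Fin n, (φ i / ζ) * c ≤ F (φ i / lam i) + G (φ i / lam' i) := by
          intro i
          have hs0 : 0 ≤ φ i / ζ := div_nonneg (hφ0 i) hζ.le
          have hs1 : φ i / ζ ≤ 1 := (div_le_one hζ).mpr (hcase i).le
          have hzF : (0:ℝ) ≤ ζ / lam i := div_nonneg hζ.le (hlam i).le
          have hzG : (0:ℝ) ≤ ζ / lam' i := div_nonneg hζ.le (hlam' i).le
          have e1 : (φ i / ζ) * (ζ / lam i) = φ i / lam i := by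
            field_simp
          have e2 : (φ i / ζ) * (ζ / lam' i) = φ i / lam' i := by
            field_simp
          have hF := hFscale (φ i / ζ) (ζ / lam i) hs0 hs1 hzF
          have hG := hGscale (φ i / ζ) (ζ / lam' i) hs0 hs1 hzG
          rw [e1] at hF
          rw [e2] at hG
          have hci : c ≤ F (ζ / lam i) + G (ζ / lam' i) :=
            Finset.inf'_le _ (Finset.mem_univ i)
          calc (φ i / ζ) * c ≤ (φ i / ζ) * (F (ζ / lam i) + G (ζ / lam' i)) :=
                mul_le_mul_of_nonneg_left hci hs0
            _ = (φ i / ζ) * F (ζ / lam i) + (φ i / ζ) * G (ζ / lam' i) := by ring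
            _ ≤ F (φ i / lam i) + G (φ i / lam' i) := add_le_add hF hG
        calc c = 1 * c := (one_mul c).symm
          _ ≤ ((∑ i, φ i) / ζ) * c := by
              apply mul_le_mul_of_nonneg_right _ hcnn
              rw [le_div_iff₀ hζ, one_mul]
              exact hfeas
          _ = ∑ i, (φ i / ζ) * c := by
              rw [Finset.sum_div, Finset.sum_mul]
          _ ≤ ∑ i, (F (φ i / lam i) + G (φ i / lam' i)) :=
              Finset.sum_le_sum (fun i _ => hstep i)
    calc c ≤ ∑ i, (F (φ i / lam i) + G (φ i / lam' i)) := key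
      _ ≤ ∑ i, (x i + y i) := Finset.sum_le_sum (fun i _ => add_le_add (hxF i) (hyG i))
  · -- feasibility of the concentrated allocation (again)
    have heq : ∀ i : Fin n, min (lam i * f (if i = m then F (ζ / lam m) else 0))
        (lam' i * g (if i = m then G (ζ / lam' m) else 0)) = if i = m then ζ else 0 := by
      intro i
      by_cases h : i = m
      · subst h
        rw [if_pos rfl, if_pos rfl, hfF _ (div_nonneg hζ.le (hlam i).le),
          hgG _ (div_nonneg hζ.le (hlam' i).le),
          mul_div_cancel₀ _ (hlam i).ne', mul_div_cancel₀ _ (hlam' i).ne', min_self, if_pos rfl]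
      · simp [h, hf0, hg0]
    rw [Finset.sum_congr rfl (fun i _ => heq i)]
    simp
  · rw [Finset.sum_congr rfl (fun i _ => by
      by_cases h : i = m <;> simp [h] :
      ∀ i ∈ Finset.univ, ((if i = m then F (ζ / lam m) else 0) +
        (if i = m then G (ζ / lam' m) else 0))
        = if i = m then F (ζ / lam m) + G (ζ / lam' m) else 0)]
    simp
end

section
/- Let t₁ and t₂ be distinct points of the Euclidean plane ℝ² and let B = { z ∈ ℝ² : dist(z, t₁) = dist(z, t₂) } be their perpendicular bisector. Let p ∈ ℝ² satisfy dist(p, t₂) < dist(p, t₁) (p lies strictly on the t₂-side of B), let s ∈ ℝ² satisfy dist(s, t₁) < dist(s, t₂) (s lies strictly on the t₁-side of B), and let p' ∈ B be a nearest point of B to p, i.e., dist(p, p') ≤ dist(p, q) for every q ∈ B. Then dist(s, p') < dist(s, p) and dist(p', t₂) < dist(p, t₁). (Perpendicular-bisector projection lemma from the proof of Proposition 6: replacing a relay position p on the far side of the bisector by its projection p' onto the bisector strictly decreases the distance to the source s and strictly decreases the larger of the distances to the two destinations.) -/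
set_option maxHeartbeats 800000

open RealInnerProductSpace

/-- Perpendicular-bisector projection lemma (from the proof of Proposition 6):
replacing a relay position `p` strictly on the `t₂`-side of the perpendicular bisector
of `t₁, t₂` by its metric projection `p'` onto the bisector strictly decreases the
distance to the source `s` (which lies strictly on the `t₁`-side) and strictly decreases
the larger of the distances to the two destinations. -/
theorem bisector_projection_improves
    (t₁ t₂ : EuclideanSpace ℝ (Fin 2)) (hne : t₁ ≠ t₂)
    (p s p' : EuclideanSpace ℝ (Fin 2))
    (hp : dist p t₂ < dist p t₁)
    (hs : dist s t₁ < dist s t₂)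
    (hp'B : dist p' t₁ = dist p' t₂)
    (hproj : ∀ q : EuclideanSpace ℝ (Fin 2), dist q t₁ = dist q t₂ → dist p p' ≤ dist p q) :
    dist s p' < dist s p ∧ dist p' t₂ < dist p t₁ := by
  set v : EuclideanSpace ℝ (Fin 2) := t₁ - t₂ with hvdef
  have hvne : v ≠ 0 := sub_ne_zero.mpr hne
  have hvnorm : (0:ℝ) < ‖v‖ := norm_pos_iff.mpr hvne
  have hv2 : (0:ℝ) < ‖v‖^2 := by positivity
  set c : ℝ := (‖t₁‖^2 - ‖t₂‖^2)/2 with hcdef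
  -- the signed "side" function
  have key : ∀ z : EuclideanSpace ℝ (Fin 2),
      dist z t₁^2 - dist z t₂^2 = -2 * (⟪z, v⟫ - c) := by
    intro z
    rw [dist_eq_norm, dist_eq_norm, hvdef, inner_sub_right,
      norm_sub_sq_real, norm_sub_sq_real, hcdef]
    ring
  have hfp : ⟪p, v⟫ - c < 0 := by
    have h := key p
    nlinarith [dist_nonneg (x := p) (y := t₁), dist_nonneg (x := p) (y := t₂)]
  have hfs : (0:ℝ) < ⟪s, v⟫ - c := by
    have h := key s
    nlinarith [dist_nonneg (x := s) (y := t₁), dist_nonneg (x := s) (y := t₂)]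
  have hfp' : ⟪p', v⟫ - c = 0 := by
    have h := key p'
    rw [hp'B] at h
    nlinarith
  set lam : ℝ := -(⟪p, v⟫ - c)/‖v‖^2 with hlamdef
  have hlam : 0 < lam := by
    apply div_pos (by linarith) hv2
  -- the candidate projection point
  set q : EuclideanSpace ℝ (Fin 2) := p + lam • v with hqdef
  have hqv : ⟪q, v⟫ = c := by
    rw [hqdef, inner_add_left, real_inner_smul_left, real_inner_self_eq_norm_sq]
    have : lam * ‖v‖^2 = -(⟪p, v⟫ - c) := by
      rw [hlamdef]; exact div_mul_cancel₀ _ (ne_of_gt hv2)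
    linarith
  have hqB : dist q t₁ = dist q t₂ := by
    have h := key q
    rw [hqv] at h
    have h2 : dist q t₁^2 = dist q t₂^2 := by linarith
    have h1 := dist_nonneg (x := q) (y := t₁)
    have h0 := dist_nonneg (x := q) (y := t₂)
    nlinarith
  have hdpq : dist p q = lam * ‖v‖ := by
    rw [hqdef, dist_self_add_right, norm_smul, Real.norm_eq_abs,
      abs_of_pos hlam]
  have hle : ‖p' - p‖ ≤ lam * ‖v‖ := by
    have := hproj q hqB
    rw [hdpq, dist_eq_norm] at this
    calc ‖p' - p‖ = ‖p - p'‖ := norm_sub_rev _ _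
    _ ≤ lam * ‖v‖ := this
  have hlammul : lam * ‖v‖^2 = -(⟪p, v⟫ - c) := by
    rw [hlamdef]; exact div_mul_cancel₀ _ (ne_of_gt hv2)
  have hinner : ⟪p' - p, v⟫ = lam * ‖v‖^2 := by
    rw [inner_sub_left, hlammul]
    linarith
  have hge : lam * ‖v‖ ≤ ‖p' - p‖ := by
    have hcs := real_inner_le_norm (p' - p) v
    rw [hinner] at hcs
    have : lam * ‖v‖ * ‖v‖ ≤ ‖p' - p‖ * ‖v‖ := by nlinarith
    exact le_of_mul_le_mul_right this hvnorm
  have heq : ‖p' - p‖ = lam * ‖v‖ := le_antisymm hle hge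
  -- p' = p + lam • v
  have hp'eq : p' = p + lam • v := by
    have hz : ‖(p' - p) - lam • v‖^2 = 0 := by
      rw [norm_sub_sq_real, real_inner_smul_right, hinner, norm_smul,
        Real.norm_eq_abs, abs_of_pos hlam, heq]
      ring
    have hz2 : (p' - p) - lam • v = 0 := norm_eq_zero.mp (sq_eq_zero_iff.mp hz)
    have : p' - p = lam • v := sub_eq_zero.mp hz2
    rw [← this]; abel
  constructor
  · -- dist s p' < dist s p
    have hexp : dist s p'^2 = dist s p^2 - 2*lam*(⟪s,v⟫ - ⟪p,v⟫) + lam^2*‖v‖^2 := by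
      rw [dist_eq_norm, dist_eq_norm, hp'eq]
      have : s - (p + lam • v) = (s - p) - lam • v := by abel
      rw [this, norm_sub_sq_real, real_inner_smul_right, inner_sub_left,
        norm_smul, Real.norm_eq_abs, abs_of_pos hlam]
      ring
    have hlam2 := hlammul
    have hlt : dist s p'^2 < dist s p^2 := by nlinarith
    have h0 := dist_nonneg (x := s) (y := p')
    have h1 := dist_nonneg (x := s) (y := p)
    nlinarith
  · -- dist p' t₂ < dist p t₁
    have hp't : dist p' t₂ = dist p' t₁ := by
      have h := key p'
      rw [hp'B] at h
      exact hp'B.symm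
    rw [hp't]
    have hptv : ⟪p - t₁, v⟫ = (⟪p,v⟫ - c) - ‖v‖^2/2 := by
      rw [inner_sub_left, hvdef, inner_sub_right, inner_sub_right,
        norm_sub_sq_real, real_inner_self_eq_norm_sq, hcdef]
      ring
    have hexp : dist p' t₁^2 = dist p t₁^2 + 2*lam*⟪p - t₁, v⟫ + lam^2*‖v‖^2 := by
      rw [dist_eq_norm, dist_eq_norm, hp'eq]
      have : (p + lam • v) - t₁ = (p - t₁) + lam • v := by abel
      rw [this, norm_add_sq_real, real_inner_smul_right, norm_smul,
        Real.norm_eq_abs, abs_of_pos hlam]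
      ring
    have hlam2 := hlammul
    have hlt : dist p' t₁^2 < dist p t₁^2 := by nlinarith
    have h0 := dist_nonneg (x := p') (y := t₁)
    have h1 := dist_nonneg (x := p) (y := t₁)
    nlinarith
end
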